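/- arXiv:2212.07343 — 2 statements merged into one kernel-verified Lean document; each statement's English description precedes it below -/
import Mathlib

section
/- Let t ≥ 2 be an integer and let μ ⊆ λ be partitions with λ/μ tileable by t-ribbons. Then sgn_t(λ/μ) · sgn_t(λ'/μ') = (−1)^{(t−1)·(|λ^{(0)}|+⋯+|λ^{(t−1)}| − |μ^{(0)}|−⋯−|μ^{(t−1)}|)}, where λ', μ' are the conjugate partitions and (λ^{(0)},…,λ^{(t−1)}), (μ^{(0)},…,μ^{(t−1)}) are the t-quotients of λ and μ. -/
open scoped BigOperators

noncomputable section

/-! ## The ring of symmetric functions and basic operators -/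

/-- The ring of symmetric functions `Λ` (with coefficients in `ℚ`, so that the
half occurring in the definition of `sp_λ` is available), realised as the
polynomial ring in the algebraically independent complete homogeneous symmetric
functions `h₁, h₂, h₃, …`; the variable `n : ℕ` stands for `h_{n+1}`. -/
abbrev SymF : Type := MvPolynomial ℕ ℚ

/-- The complete homogeneous symmetric function `h_r ∈ Λ`, with `h_0 = 1` and
`h_r = 0` for `r < 0`. -/
def hh (r : ℤ) : SymF :=
  if r < 0 then 0 else if r = 0 then 1 else MvPolynomial.X (r.toNat - 1)

/-- The algebra homomorphism `φ_t : Λ → Λ` determined by `φ_t h_r = h_{r/t}`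
if `t ∣ r` and `φ_t h_r = 0` otherwise. -/
def phi (t : ℕ) : SymF →ₐ[ℚ] SymF :=
  MvPolynomial.aeval fun n =>
    if t ∣ (n + 1) then hh (((n + 1) / t : ℕ) : ℤ) else 0

/-- The elementary symmetric function `e_r`, via the Jacobi–Trudi determinant
`e_r = s_{(1^r)} = det_{1 ≤ i,j ≤ r}(h_{1 - i + j})`. -/
def ee (r : ℕ) : SymF :=
  Matrix.det (Matrix.of fun i j : Fin r => hh (1 + (j : ℤ) - (i : ℤ)))

/-- The involution `ω : Λ → Λ`, determined by `ω h_r = e_r`. -/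
def omegaSym : SymF →ₐ[ℚ] SymF :=
  MvPolynomial.aeval fun n => ee (n + 1)

/-- `(-1)^z` for an integer exponent `z`. -/
def msign (z : ℤ) : ℤ := if Even z then 1 else -1

/-! ## Partitions -/

/-- A partition, encoded as a weakly decreasing, eventually zero function
`ℕ → ℕ` (0-indexed: `f i` is the part `λ_{i+1}`). -/
def IsPartition (f : ℕ → ℕ) : Prop :=
  Antitone f ∧ ∃ N, ∀ i, N ≤ i → f i = 0

/-- The length `l(λ)` (number of nonzero parts). -/
def plen (f : ℕ → ℕ) : ℕ := sInf {N | ∀ i, N ≤ i → f i = 0}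

/-- Containment `μ ⊆ λ` of partitions. -/
def SubP (mu lam : ℕ → ℕ) : Prop := ∀ i, mu i ≤ lam i

/-- The conjugate partition `λ'`. -/
def conjP (f : ℕ → ℕ) : ℕ → ℕ := fun j => Set.ncard {i | j < f i}

/-- The Frobenius rank `rk(λ)` (side length of the Durfee square). -/
def rk (f : ℕ → ℕ) : ℕ := Set.ncard {i | i < f i}

/-- The size `|λ|` of a partition. -/
def psize (f : ℕ → ℕ) : ℕ := ∑ i ∈ Finset.range (plen f), f i

/-- `λ` is `z`-asymmetric, i.e. `λ = (a | a + z)` in Frobenius notation, which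
amounts to `λ'_i = λ_i + z` for all `1 ≤ i ≤ rk(λ)`.  `(-1)`-asymmetric
partitions are called orthogonal, `1`-asymmetric ones symplectic, and
`0`-asymmetric ones are exactly the self-conjugate ones. -/
def ZAsymmetric (z : ℤ) (f : ℕ → ℕ) : Prop :=
  ∀ i < rk f, (conjP f i : ℤ) = (f i : ℤ) + z

/-- The one-row partition `(c)`. -/
def rowP (c : ℕ) : ℕ → ℕ := fun i => if i = 0 then c else 0

/-- `λ` is a `t`-core: no box of the Young diagram has hook length `t`
(the hook length of the box `(i,j)` is `λ_i + λ'_j - i - j + 1`, 1-indexed). -/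
def IsTCore (t : ℕ) (f : ℕ → ℕ) : Prop :=
  ∀ i j, j < f i → f i + conjP f j ≠ i + j + 1 + t

/-! ## Schur functions and universal characters via Jacobi–Trudi determinants -/

/-- The Jacobi–Trudi determinant `det_{1 ≤ i,j ≤ n}(h_{λ_i - μ_j - i + j})`. -/
def sSkewN (lam mu : ℕ → ℕ) (n : ℕ) : SymF :=
  Matrix.det (Matrix.of fun i j : Fin n =>
    hh ((lam i : ℤ) - (mu j : ℤ) - (i : ℤ) + (j : ℤ)))

open Classical in
/-- The skew Schur function `s_{λ/μ}`, defined by the Jacobi–Trudi formula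
(and `0` if `μ ⊄ λ`). -/
def sSkew (lam mu : ℕ → ℕ) : SymF :=
  if SubP mu lam then sSkewN lam mu (plen lam) else 0

/-- The Schur function `s_λ`. -/
def sFun (lam : ℕ → ℕ) : SymF := sSkew lam fun _ => 0

/-- The universal orthogonal character
`o_λ = det_{1 ≤ i,j ≤ n}(h_{λ_i - i + j} - h_{λ_i - i - j})`. -/
def oU (lam : ℕ → ℕ) : SymF :=
  Matrix.det (Matrix.of fun i j : Fin (plen lam) =>
    hh ((lam i : ℤ) - (i : ℤ) + (j : ℤ)) -
      hh ((lam i : ℤ) - (i : ℤ) - (j : ℤ) - 2))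

/-- The universal symplectic character
`sp_λ = (1/2) · det_{1 ≤ i,j ≤ n}(h_{λ_i - i + j} + h_{λ_i - i - j + 2})`. -/
def spU (lam : ℕ → ℕ) : SymF :=
  (1 / 2 : ℚ) • Matrix.det (Matrix.of fun i j : Fin (plen lam) =>
    hh ((lam i : ℤ) - (i : ℤ) + (j : ℤ)) +
      hh ((lam i : ℤ) - (i : ℤ) - (j : ℤ)))

/-- The universal odd orthogonal character
`so_λ = det_{1 ≤ i,j ≤ n}(h_{λ_i - i + j} + h_{λ_i - i - j + 1})`. -/
def soU (lam : ℕ → ℕ) : SymF :=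
  Matrix.det (Matrix.of fun i j : Fin (plen lam) =>
    hh ((lam i : ℤ) - (i : ℤ) + (j : ℤ)) +
      hh ((lam i : ℤ) - (i : ℤ) - (j : ℤ) - 1))

/-- The variant `so⁻_λ = det_{1 ≤ i,j ≤ n}(h_{λ_i - i + j} - h_{λ_i - i - j + 1})`. -/
def soMinusU (lam : ℕ → ℕ) : SymF :=
  Matrix.det (Matrix.of fun i j : Fin (plen lam) =>
    hh ((lam i : ℤ) - (i : ℤ) + (j : ℤ)) -
      hh ((lam i : ℤ) - (i : ℤ) - (j : ℤ) - 1))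

/-- The rational universal character `rs_{λ,μ}` (one alphabet), via Koike's block
determinant, for weakly decreasing integer sequences `λ`, `μ` of lengths `n`, `m`. -/
def rsN (n m : ℕ) (lam mu : ℕ → ℤ) : SymF :=
  Matrix.det (Matrix.fromBlocks
    (Matrix.of fun i j : Fin n => hh (lam i - (i : ℤ) + (j : ℤ)))
    (Matrix.of fun (i : Fin n) (j : Fin m) => hh (lam i - (i : ℤ) - (j : ℤ) - 1))
    (Matrix.of fun (i : Fin m) (j : Fin n) => hh (mu i - (i : ℤ) - (j : ℤ) - 1))
    (Matrix.of fun i j : Fin m => hh (mu i - (i : ℤ) + (j : ℤ))))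

/-- `rs_{λ,μ}` for partitions `λ`, `μ`. -/
def rsP (lam mu : ℕ → ℕ) : SymF :=
  rsN (plen lam) (plen mu) (fun i => (lam i : ℤ)) fun i => (mu i : ℤ)

/-! ## Beta sets, cores, quotients and signs -/

/-- The beta set `β(λ; N) = {λ_i + N - i : 1 ≤ i ≤ N}`. -/
def betaSet (lam : ℕ → ℕ) (N : ℕ) : Finset ℕ :=
  (Finset.range N).image fun i => lam i + (N - 1 - i)

/-- `m_r(λ; N)`: the number of elements of `β(λ; N)` congruent to `r` mod `t`. -/
def mr (t : ℕ) (lam : ℕ → ℕ) (N r : ℕ) : ℕ :=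
  ((betaSet lam N).filter fun x => x % t = r).card

/-- The `r`-th component `λ^{(r)}` of the `t`-quotient of `λ` (computed, as per
the convention of the paper, from a beta set whose size is a multiple of `t`):
writing the elements of `β(λ; N)` in residue class `r` as `ξ_k t + r` with
`ξ_1 > ⋯ > ξ_m ≥ 0`, the `k`-th part is `ξ_k - m + k`. -/
def tQuot (t : ℕ) (lam : ℕ → ℕ) (r : ℕ) : ℕ → ℕ := fun k =>
  let N := t * (plen lam + 1)
  let S := (betaSet lam N).filter fun x => x % t = r
  if k < S.card then (S.sort (· ≤ ·)).getD (S.card - 1 - k) 0 / t + (k + 1) - S.card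
  else 0

/-- The `t`-core of `λ`: its `i`-th part is `ξ̃_i - N + i` where
`ξ̃_1 > ⋯ > ξ̃_N` are the integers `k t + r`, `0 ≤ k < m_r(λ; N)`, `0 ≤ r < t`. -/
def tCore (t : ℕ) (lam : ℕ → ℕ) : ℕ → ℕ := fun i =>
  let N := t * (plen lam + 1)
  let T := (Finset.range t).biUnion fun r =>
    (Finset.range (mr t lam N r)).image fun k => k * t + r
  if i < N then (T.sort (· ≤ ·)).getD (N - 1 - i) 0 + (i + 1) - N else 0

/-- The sign of the permutation `w_t(λ; N)` sorting the beta set so that the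
residues mod `t` increase and the entries within a residue class decrease,
computed as `(-1)` to the number of inversions: an inversion is a pair
`x > y` of elements of the beta set with `x mod t > y mod t`. -/
def sgnW (t : ℕ) (lam : ℕ → ℕ) (N : ℕ) : ℤ :=
  (-1) ^ ((betaSet lam N ×ˢ betaSet lam N).filter fun p : ℕ × ℕ =>
    p.2 < p.1 ∧ p.2 % t < p.1 % t).card

/-! ## Ribbons and tileability -/

/-- The cells of the skew shape `λ/μ` (0-indexed rows and columns). -/
def SkewCells (lam mu : ℕ → ℕ) : Set (ℕ × ℕ) := {c | mu c.1 ≤ c.2 ∧ c.2 < lam c.1}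

/-- Two cells are adjacent if they share an edge. -/
def CellAdj (c d : ℕ × ℕ) : Prop :=
  (c.1 = d.1 ∧ (c.2 + 1 = d.2 ∨ d.2 + 1 = c.2)) ∨
    (c.2 = d.2 ∧ (c.1 + 1 = d.1 ∨ d.1 + 1 = c.1))

/-- A set of cells is (edge-)connected. -/
def ConnectedCells (S : Set (ℕ × ℕ)) : Prop :=
  ∀ c ∈ S, ∀ d ∈ S, Relation.ReflTransGen (fun x y => x ∈ S ∧ y ∈ S ∧ CellAdj x y) c d

/-- The set of cells contains a `2 × 2` square. -/
def Has2x2 (S : Set (ℕ × ℕ)) : Prop :=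
  ∃ i j, (i, j) ∈ S ∧ (i + 1, j) ∈ S ∧ (i, j + 1) ∈ S ∧ (i + 1, j + 1) ∈ S

/-- The skew shape `λ/μ` is a `t`-ribbon: connected, `t` cells, no `2 × 2` square. -/
def IsRibbon (t : ℕ) (lam mu : ℕ → ℕ) : Prop :=
  SubP mu lam ∧ (SkewCells lam mu).ncard = t ∧
    ConnectedCells (SkewCells lam mu) ∧ ¬Has2x2 (SkewCells lam mu)

/-- The height of a ribbon `λ/μ`: one less than the number of rows it occupies. -/
def ribbonHeight (lam mu : ℕ → ℕ) : ℕ :=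
  (Prod.fst '' SkewCells lam mu).ncard - 1

/-- `ν` (as `ν 0, ν 1, …, ν k`) is a ribbon decomposition of the skew shape
`λ/μ` into `t`-ribbons: `ν 0 = μ`, `ν k = λ`, every `ν i` is a partition, and
each `ν (i+1) / ν i` is a `t`-ribbon. -/
def IsRibbonDecomp (t : ℕ) (mu lam : ℕ → ℕ) (k : ℕ) (ν : ℕ → ℕ → ℕ) : Prop :=
  ν 0 = mu ∧ ν k = lam ∧ (∀ i ≤ k, IsPartition (ν i)) ∧
    ∀ i < k, IsRibbon t (ν (i + 1)) (ν i)

/-- The height of a ribbon decomposition: the sum of the heights of its ribbons.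
The sign `sgn_t(λ/μ)` is `(-1)` to this quantity (for any decomposition). -/
def decompHeight (ν : ℕ → ℕ → ℕ) (k : ℕ) : ℕ :=
  ∑ i ∈ Finset.range k, ribbonHeight (ν (i + 1)) (ν i)

/-- The skew shape `λ/μ` is tileable by `t`-ribbons. -/
def Tileable (t : ℕ) (mu lam : ℕ → ℕ) : Prop :=
  ∃ k ν, IsRibbonDecomp t mu lam k ν

/-! ## The signs `ε` of Ayyer–Kumari -/

/-- The exponent `ε^o_{λ;nt}`. -/
def epsO (t : ℕ) (lam : ℕ → ℕ) (n : ℕ) : ℕ :=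
  (∑ r ∈ Finset.Icc ((t + 2) / 2) (t - 1), Nat.choose (mr t lam (n * t) r + 1) 2)
    + rk (tCore t lam)
    + if 2 ∣ t then Nat.choose (n + 1) 2 + n * rk (tCore t lam) else 0

/-- The exponent `ε^sp_{λ;nt}`. -/
def epsSp (t : ℕ) (lam : ℕ → ℕ) (n : ℕ) : ℕ :=
  (∑ r ∈ Finset.Icc (t / 2) (t - 2), Nat.choose (mr t lam (n * t) r + 1) 2)
    + if 2 ∣ t then Nat.choose (n + 1) 2 + n * rk (tCore t lam) else 0

/-- The exponent `ε^so_{λ;nt}`. -/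
def epsSo (t : ℕ) (lam : ℕ → ℕ) (n : ℕ) : ℕ :=
  (∑ r ∈ Finset.Icc ((t + 1) / 2) (t - 1), Nat.choose (mr t lam (n * t) r + 1) 2)
    + if 2 ∣ t then 0 else n * rk (tCore t lam)

/-! ## Evaluation at a finite complex alphabet -/

/-- The complete homogeneous polynomial `h_r(y₁,…,y_N)` evaluated at complex
numbers: the sum over all multisets of size `r` of the product of the values. -/
def hEval {N : ℕ} (y : Fin N → ℂ) (r : ℕ) : ℂ :=
  ∑ m ∈ (Finset.univ : Finset (Fin N)).sym r, (Multiset.map y (m : Multiset (Fin N))).prod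

/-- Evaluation of a universal symmetric function at the finite alphabet
`y₁, …, y_N` (substituting `h_r ↦ h_r(y)`). -/
def evalSym {N : ℕ} (y : Fin N → ℂ) : SymF →ₐ[ℚ] ℂ :=
  MvPolynomial.aeval fun n => hEval y (n + 1)

/-- The Schur polynomial `s_λ(y₁,…,y_N)` (equal to the ratio of alternants when
the `y_i` are distinct, and `0` when `l(λ) > N`). -/
def schurC {N : ℕ} (lam : ℕ → ℕ) (y : Fin N → ℂ) : ℂ := evalSym y (sFun lam)

/-- The algebra homomorphism `φ_t^q : Λ → Λ[q]` with
`φ_t^q h_{at+b} = q^b ∑_{k ≥ 0} q^{kt} h_{a-k}` for `a ≥ 0`, `0 ≤ b ≤ t-1`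
(the sum is finite since `h_{a-k} = 0` for `k > a`). -/
def phiQ (t : ℕ) : SymF →ₐ[ℚ] Polynomial SymF :=
  MvPolynomial.aeval fun m =>
    ∑ k ∈ Finset.range ((m + 1) / t + 1),
      Polynomial.C (hh ((((m + 1) / t - k : ℕ)) : ℤ)) *
        Polynomial.X ^ ((m + 1) % t + k * t)


/-!
Conjugation transposes each ribbon, and a `t`-ribbon spanning `r` rows and `c` columns has
`r + c = t + 1`; so the heights of a decomposition `D` of `λ/μ` into `k` ribbons and of its
transpose `D'` (a decomposition of `λ'/μ'`) add up to `k (t - 1)`.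

On the `t`-abacus of a beta set, adding a `t`-ribbon moves one bead one step down its runner,
past as many beads (all on other runners) as the height of the ribbon. Such a move raises
`∑ r |λ^{(r)}| = ∑_{x ∈ β} ⌊x / t⌋ - ∑ r C(m_r, 2)` by exactly one, so `k` is the difference of
the quotient sizes of `λ` and `μ`; and it changes the parity of the number of inversions of
`β` by the height, so `(-1)^{ht(D)}` depends only on `λ/μ`, and every decomposition of `λ'/μ'`
has the sign of `D'`.
-/

open Finset

lemma neg_one_pow_eq_of_natCast_eq {m n : ℕ} (h : (m : ZMod 2) = n) : (-1 : ℤ) ^ m = (-1) ^ n :=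
  neg_one_pow_congr (by simp only [Nat.even_iff, (ZMod.natCast_eq_natCast_iff' m n 2).1 h])

lemma msign_natCast (n : ℕ) : msign n = (-1) ^ n := by
  by_cases h : Even n
  · rw [msign, if_pos (by exact_mod_cast h), h.neg_one_pow]
  · rw [msign, if_neg (by exact_mod_cast h), (Nat.not_even_iff_odd.1 h).neg_one_pow]

section Partitions

variable {f mu lam : ℕ → ℕ}

lemma apply_eq_zero_of_plen_le (hf : ∃ N, ∀ i, N ≤ i → f i = 0) {i : ℕ} (hi : plen f ≤ i) :
    f i = 0 :=
  Nat.sInf_mem hf i hi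

lemma plen_le {N : ℕ} (hN : ∀ i, N ≤ i → f i = 0) : plen f ≤ N :=
  Nat.sInf_le hN

lemma lt_plen_of_pos (hf : ∃ N, ∀ i, N ≤ i → f i = 0) {i : ℕ} (hi : 0 < f i) : i < plen f := by
  by_contra! h
  exact hi.ne' (apply_eq_zero_of_plen_le hf h)

lemma psize_eq_sum_range {M : ℕ} (hM : ∀ i, M ≤ i → f i = 0) :
    psize f = ∑ i ∈ range M, f i :=
  sum_subset (by simpa using plen_le hM) fun i _ hi =>
    apply_eq_zero_of_plen_le ⟨M, hM⟩ (by simpa using hi)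

lemma finite_setOf_lt (hf : ∃ N, ∀ i, N ≤ i → f i = 0) (j : ℕ) : {i | j < f i}.Finite := by
  obtain ⟨N, hN⟩ := hf
  refine (Set.finite_Iio N).subset fun i (hi : j < f i) => Set.mem_Iio.mpr ?_
  by_contra! h
  exact absurd (hN i h) (by omega)

lemma IsPartition.lt_conjP_iff (hf : IsPartition f) {i j : ℕ} : j < conjP f i ↔ i < f j := by
  have hlower : ∀ k k', k' ≤ k → i < f k → i < f k' := fun k k' h hk => hk.trans_le (hf.1 h)
  constructor
  · intro h
    by_contra hj
    have hsub : {k | i < f k} ⊆ Set.Iio j := fun k hk =>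
      Set.mem_Iio.mpr (by by_contra! hjk; exact hj (hlower k j hjk hk))
    have := Set.ncard_le_ncard hsub (Set.finite_Iio j)
    rw [← coe_Iio, Set.ncard_coe_finset, Nat.card_Iio] at this
    exact absurd h (by unfold conjP; omega)
  · intro h
    have hsub : Set.Iic j ⊆ {k | i < f k} := fun k hk => hlower j k hk h
    have := Set.ncard_le_ncard hsub (finite_setOf_lt hf.2 i)
    rw [← coe_Iic, Set.ncard_coe_finset, Nat.card_Iic] at this
    unfold conjP
    omega

lemma IsPartition.conjP (hf : IsPartition f) : IsPartition (conjP f) := by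
  refine ⟨fun i i' hii' => Set.ncard_le_ncard (fun k (hk : i' < f k) => ?_)
    (finite_setOf_lt hf.2 i), f 0, fun j hj => ?_⟩
  · exact lt_of_le_of_lt hii' hk
  · have : {i | j < f i} = ∅ :=
      Set.eq_empty_of_forall_notMem fun i (hi : j < f i) => by have := hf.1 (Nat.zero_le i); omega
    rw [_root_.conjP, this, Set.ncard_empty]

lemma SubP.conjP (hsub : SubP mu lam) (hlam : IsPartition lam) : SubP (conjP mu) (conjP lam) :=
  fun j => Set.ncard_le_ncard (fun k (hk : j < mu k) => hk.trans_le (hsub k))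
    (finite_setOf_lt hlam.2 j)

lemma SubP.apply_eq_zero (hsub : SubP mu lam) {i : ℕ} (hi : lam i = 0) : mu i = 0 :=
  Nat.le_zero.1 (hi ▸ hsub i)

lemma skewCells_conjP (hlam : IsPartition lam) (hmu : IsPartition mu) :
    SkewCells (conjP lam) (conjP mu) = Prod.swap '' SkewCells lam mu := by
  ext ⟨i, j⟩
  rw [Set.image_swap_eq_preimage_swap]
  simp only [SkewCells, Set.mem_ofPred_eq, Set.mem_preimage, Prod.swap_prod_mk,
    hlam.lt_conjP_iff, ← not_lt, hmu.lt_conjP_iff]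

lemma CellAdj.swap {c d : ℕ × ℕ} (h : CellAdj c d) : CellAdj c.swap d.swap :=
  h.symm

lemma IsRibbon.conjP {t : ℕ} (hlam : IsPartition lam) (hmu : IsPartition mu)
    (hR : IsRibbon t lam mu) : IsRibbon t (conjP lam) (conjP mu) := by
  obtain ⟨hsub, hcard, hconn, h2x2⟩ := hR
  rw [IsRibbon, skewCells_conjP hlam hmu]
  refine ⟨hsub.conjP hlam, by rwa [Set.ncard_image_of_injective _ Prod.swap_injective], ?_, ?_⟩
  · rintro _ ⟨c, hc, rfl⟩ _ ⟨d, hd, rfl⟩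
    refine Relation.ReflTransGen.lift Prod.swap ?_ _ _ (hconn c hc d hd)
    rintro x y ⟨hx, hy, hxy⟩
    exact ⟨⟨x, hx, rfl⟩, ⟨y, hy, rfl⟩, hxy.swap⟩
  · rintro ⟨i, j, h1, h2, h3, h4⟩
    rw [Set.image_swap_eq_preimage_swap] at h1 h2 h3 h4
    exact h2x2 ⟨j, i, h1, h3, h2, h4⟩

end Partitions

section Ribbons

variable {t : ℕ} {lam mu : ℕ → ℕ}

lemma exists_mem_fst_eq_of_reflTransGen {S : Set (ℕ × ℕ)} {c d : ℕ × ℕ}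
    (h : Relation.ReflTransGen (fun x y => x ∈ S ∧ y ∈ S ∧ CellAdj x y) c d) (hc : c ∈ S)
    {m : ℕ} (hcm : c.1 ≤ m) (hmd : m ≤ d.1) : ∃ e ∈ S, e.1 = m := by
  induction h generalizing m with
  | refl => exact ⟨c, hc, le_antisymm hcm hmd⟩
  | @tail x y _ hxy ih =>
    by_cases hm : m ≤ x.1
    · exact ih hcm hm
    · obtain ⟨-, hy, hadj⟩ := hxy
      refine ⟨y, hy, ?_⟩
      rcases hadj with ⟨h', _⟩ | ⟨_, h' | h'⟩ <;> omega

lemma exists_vertical_of_reflTransGen {S : Set (ℕ × ℕ)} {c d : ℕ × ℕ}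
    (h : Relation.ReflTransGen (fun x y => x ∈ S ∧ y ∈ S ∧ CellAdj x y) c d)
    {i : ℕ} (hc : c.1 ≤ i) (hd : i + 1 ≤ d.1) : ∃ j, (i, j) ∈ S ∧ (i + 1, j) ∈ S := by
  induction h with
  | refl => omega
  | @tail x y _ hxy ih =>
    by_cases hx : i + 1 ≤ x.1
    · exact ih hx
    · obtain ⟨hxS, hyS, hadj⟩ := hxy
      rcases hadj with ⟨h', _⟩ | ⟨h2, h' | h'⟩
      · omega
      · obtain ⟨x1, x2⟩ := x
        obtain ⟨y1, y2⟩ := y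
        obtain ⟨rfl, rfl⟩ : x1 = i ∧ y1 = i + 1 := by simp only at h' hx hd ⊢; omega
        simp only at h2
        exact ⟨x2, hxS, h2 ▸ hyS⟩
      · omega

lemma IsRibbon.lt_of_le_of_le (hR : IsRibbon t lam mu) {a b i : ℕ} (ha : mu a < lam a)
    (hb : mu b < lam b) (hai : a ≤ i) (hib : i ≤ b) : mu i < lam i := by
  have hca : (a, mu a) ∈ SkewCells lam mu := ⟨le_rfl, ha⟩
  obtain ⟨e, ⟨he1, he2⟩, rfl⟩ := exists_mem_fst_eq_of_reflTransGen
    (hR.2.2.1 _ hca (b, mu b) ⟨le_rfl, hb⟩) hca (m := i) hai hib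
  omega

lemma IsRibbon.apply_succ_eq (hR : IsRibbon t lam mu) (hlam : Antitone lam) (hmu : Antitone mu)
    {i : ℕ} (hi : mu i < lam i) (hi1 : mu (i + 1) < lam (i + 1)) : lam (i + 1) = mu i + 1 := by
  have hci : (i, mu i) ∈ SkewCells lam mu := ⟨le_rfl, hi⟩
  obtain ⟨j, ⟨hij, -⟩, ⟨-, hj1⟩⟩ := exists_vertical_of_reflTransGen
    (hR.2.2.1 _ hci (i + 1, mu (i + 1)) ⟨le_rfl, hi1⟩) (i := i) le_rfl le_rfl
  have hij : mu i ≤ j := hij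
  have hj1 : j < lam (i + 1) := hj1
  have hlam1 : lam (i + 1) ≤ lam i := hlam (Nat.le_add_right i 1)
  have hmu1 : mu (i + 1) ≤ mu i := hmu (Nat.le_add_right i 1)
  by_contra hne
  exact hR.2.2.2 ⟨i, mu i, hci, ⟨hmu1, show mu i < lam (i + 1) by omega⟩,
    ⟨show mu i ≤ mu i + 1 by omega, show mu i + 1 < lam i by omega⟩,
    ⟨show mu (i + 1) ≤ mu i + 1 by omega, show mu i + 1 < lam (i + 1) by omega⟩⟩

/-- `λ/μ` occupies exactly the rows `a, …, b`, and each row `i + 1` ends in the column where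
row `i` begins. -/
structure RibbonRows (lam mu : ℕ → ℕ) (a b : ℕ) : Prop where
  le : a ≤ b
  lt_iff : ∀ i, mu i < lam i ↔ a ≤ i ∧ i ≤ b
  succ_eq : ∀ i, a ≤ i → i < b → lam (i + 1) = mu i + 1

lemma IsRibbon.exists_ribbonRows (hR : IsRibbon t lam mu) (hlam : IsPartition lam)
    (hmu : Antitone mu) (ht : t ≠ 0) : ∃ a b, RibbonRows lam mu a b := by
  obtain ⟨c, hc⟩ : (SkewCells lam mu).Nonempty := Set.nonempty_of_ncard_ne_zero (hR.2.1 ▸ ht)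
  set R := (range (plen lam)).filter fun i => mu i < lam i
  have hmemR : ∀ i, i ∈ R ↔ mu i < lam i := fun i => by
    simpa [R] using fun h => lt_plen_of_pos hlam.2 (by omega)
  have hne : R.Nonempty := ⟨c.1, (hmemR _).2 (hc.1.trans_lt hc.2)⟩
  have ha := (hmemR _).1 (R.min'_mem hne)
  have hb := (hmemR _).1 (R.max'_mem hne)
  refine ⟨R.min' hne, R.max' hne, R.min'_le _ (R.max'_mem hne), fun i => ⟨fun hi =>
    ⟨R.min'_le _ ((hmemR i).2 hi), R.le_max' _ ((hmemR i).2 hi)⟩,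
    fun hi => hR.lt_of_le_of_le ha hb hi.1 hi.2⟩, fun i hai hib => ?_⟩
  exact hR.apply_succ_eq hlam.1 hmu (hR.lt_of_le_of_le ha hb hai hib.le)
    (hR.lt_of_le_of_le ha hb (by omega) hib)

lemma sum_Icc_sub_add_of_succ_eq {a n : ℕ} (hle : ∀ i ∈ Icc a (a + n), mu i ≤ lam i)
    (hstep : ∀ i, a ≤ i → i < a + n → lam (i + 1) = mu i + 1) :
    ∑ i ∈ Icc a (a + n), (lam i - mu i) + mu (a + n) = n + lam a := by
  induction n with
  | zero =>
    have := hle a (by simp)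
    simp only [add_zero, Icc_self, sum_singleton]
    omega
  | succ n ih =>
    have ih := ih (fun i hi => hle i (by simp at hi ⊢; omega)) fun i h1 h2 => hstep i h1 (by omega)
    have hstep := hstep (a + n) (by omega) (by omega)
    have hle := hle (a + n + 1) (by simp; omega)
    rw [← add_assoc, sum_Icc_succ_top (by omega)]
    omega

namespace RibbonRows

variable {a b : ℕ}

lemma image_fst_skewCells (h : RibbonRows lam mu a b) :
    Prod.fst '' SkewCells lam mu = Set.Icc a b := by
  ext i
  refine ⟨?_, fun hi => ⟨(i, mu i), ⟨le_rfl, (h.lt_iff i).2 hi⟩, rfl⟩⟩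
  rintro ⟨c, ⟨h1, h2⟩, rfl⟩
  exact (h.lt_iff c.1).1 (by omega)

lemma ribbonHeight_eq (h : RibbonRows lam mu a b) : ribbonHeight lam mu = b - a := by
  rw [ribbonHeight, h.image_fst_skewCells, ← coe_Icc, Set.ncard_coe_finset, Nat.card_Icc]
  omega

lemma skewCells_eq (h : RibbonRows lam mu a b) : SkewCells lam mu =
    ↑((Icc a b).biUnion fun i => (Ico (mu i) (lam i)).map ⟨(i, ·), Prod.mk_right_injective i⟩) := by
  ext ⟨i, j⟩
  simp only [SkewCells, Set.mem_ofPred_eq, coe_biUnion, mem_coe, mem_Icc, mem_map, mem_Ico,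
    Function.Embedding.coeFn_mk, Prod.mk.injEq, Set.mem_iUnion]
  constructor
  · rintro ⟨h1, h2⟩
    exact ⟨i, (h.lt_iff i).1 (by omega), j, ⟨h1, h2⟩, rfl, rfl⟩
  · rintro ⟨i, -, j, hj, rfl, rfl⟩
    exact hj

lemma ncard_skewCells_add (h : RibbonRows lam mu a b) :
    (SkewCells lam mu).ncard + mu b = (b - a) + lam a := by
  rw [h.skewCells_eq, Set.ncard_coe_finset, card_biUnion]
  · simp only [card_map, Nat.card_Ico]
    obtain ⟨n, rfl⟩ := Nat.exists_eq_add_of_le h.le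
    rw [Nat.add_sub_cancel_left]
    exact sum_Icc_sub_add_of_succ_eq (fun i hi => ((h.lt_iff i).2 (mem_Icc.1 hi)).le) h.succ_eq
  · intro i _ i' _ hii'
    simp only [Function.onFun, disjoint_left, mem_map, Function.Embedding.coeFn_mk]
    rintro _ ⟨j, -, rfl⟩ ⟨j', -, hj'⟩
    exact hii' (Prod.ext_iff.1 hj').1.symm

lemma image_snd_skewCells (h : RibbonRows lam mu a b) (hlam : Antitone lam)
    (hmu : Antitone mu) : Prod.snd '' SkewCells lam mu = Set.Ico (mu b) (lam a) := by
  ext j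
  constructor
  · rintro ⟨⟨i, j⟩, hc, rfl⟩
    obtain ⟨h1, h2⟩ : mu i ≤ j ∧ j < lam i := hc
    have hi := (h.lt_iff i).1 (by omega)
    exact ⟨(hmu hi.2).trans h1, h2.trans_le (hlam hi.1)⟩
  · rintro ⟨h1, h2⟩
    set i := Nat.findGreatest (fun i => j < lam i) b
    have hai : a ≤ i := Nat.le_findGreatest h.le h2
    have hib : i ≤ b := Nat.findGreatest_le b
    refine ⟨(i, j), ⟨?_, Nat.findGreatest_spec (P := fun i => j < lam i) h.le h2⟩, rfl⟩
    show mu i ≤ j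
    rcases hib.eq_or_lt with hib | hib
    · exact hib ▸ h1
    · have hnot : ¬j < lam (i + 1) :=
        Nat.findGreatest_is_greatest (P := fun i => j < lam i) (Nat.lt_succ_self i) hib
      have := h.succ_eq i hai hib
      omega

lemma ribbonHeight_conjP (h : RibbonRows lam mu a b) (hlam : IsPartition lam)
    (hmu : IsPartition mu) : ribbonHeight (conjP lam) (conjP mu) = lam a - mu b - 1 := by
  simp only [ribbonHeight, skewCells_conjP hlam hmu, Set.image_image, Prod.fst_swap]
  rw [h.image_snd_skewCells hlam.1 hmu.1, ← coe_Ico, Set.ncard_coe_finset, Nat.card_Ico]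

end RibbonRows

lemma ribbonHeight_add_ribbonHeight_conjP (hR : IsRibbon t lam mu)
    (hlam : IsPartition lam) (hmu : IsPartition mu) (ht : t ≠ 0) :
    ribbonHeight lam mu + ribbonHeight (conjP lam) (conjP mu) = t - 1 := by
  obtain ⟨a, b, h⟩ := hR.exists_ribbonRows hlam hmu.1 ht
  have hsize := h.ncard_skewCells_add
  rw [hR.2.1] at hsize
  have ha := (h.lt_iff a).2 ⟨le_rfl, h.le⟩
  have hba := hmu.1 h.le
  rw [h.ribbonHeight_eq, h.ribbonHeight_conjP hlam hmu]
  omega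

end Ribbons

section Abacus

variable {t x : ℕ} {B : Finset ℕ}

def invCount (t : ℕ) (B : Finset ℕ) : ℕ :=
  #{p ∈ B ×ˢ B | p.2 < p.1 ∧ p.2 % t < p.1 % t}

lemma sgnW_eq_neg_one_pow_invCount (t : ℕ) (lam : ℕ → ℕ) (N : ℕ) :
    sgnW t lam N = (-1) ^ invCount t (betaSet lam N) :=
  rfl

lemma natCast_invCount_insert {z : ℕ} (hz : z ∉ B) :
    (invCount t (insert z B) : ZMod 2) = invCount t B + ∑ c ∈ B,
      ((if c < z ∧ c % t < z % t then 1 else 0) + (if z < c ∧ z % t < c % t then 1 else 0)) := by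
  simp only [invCount, natCast_card_filter, sum_product, sum_insert hz, lt_irrefl, false_and,
    if_false, zero_add, sum_add_distrib]
  ring

/-- A bead `c` strictly between `x` and `x + t` lies on another runner, so exactly one of the
pairs `{x, c}` and `{c, x + t}` is an inversion; for every other bead nothing changes. -/
lemma natCast_invCount_moveBead (hx : x ∈ B) (hxt : x + t ∉ B) :
    (invCount t (insert (x + t) (B.erase x)) : ZMod 2) =
      invCount t B + #{y ∈ B | x < y ∧ y < x + t} := by
  have hxC : x ∉ B.erase x := notMem_erase x B
  have hxtC : x + t ∉ B.erase x := fun h => hxt (mem_of_mem_erase h)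
  conv_rhs => rw [← insert_erase hx, natCast_invCount_insert hxC, filter_insert,
    if_neg (by omega), natCast_card_filter, add_assoc, ← sum_add_distrib]
  rw [natCast_invCount_insert hxtC]
  congr 1
  refine sum_congr rfl fun c hc => ?_
  have hcx : c ≠ x := ne_of_mem_erase hc
  have hcxt : c ≠ x + t := fun h => hxtC (h ▸ hc)
  have hsep : c % t = x % t → c + t ≤ x ∨ x + t ≤ c := fun h => by
    rcases lt_or_gt_of_ne hcx with h' | h'
    · exact Or.inl (Nat.ModEq.add_le_of_lt h h')
    · exact Or.inr (Nat.ModEq.add_le_of_lt h.symm h')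
  rw [Nat.add_mod_right]
  split_ifs <;> first | rfl | decide | (exfalso; omega)

lemma neg_one_pow_invCount_moveBead (hx : x ∈ B) (hxt : x + t ∉ B) :
    (-1 : ℤ) ^ invCount t (insert (x + t) (B.erase x)) =
      (-1) ^ #{y ∈ B | x < y ∧ y < x + t} * (-1) ^ invCount t B := by
  rw [← pow_add]
  refine neg_one_pow_eq_of_natCast_eq ?_
  rw [natCast_invCount_moveBead hx hxt, Nat.cast_add, add_comm]

/-- The number of one-step upward moves that push every bead of the `t`-abacus of `B` to the
top of its runner; for a beta set of `λ` this is `∑ r, |λ^{(r)}|`. -/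
def quotWeight (t : ℕ) (B : Finset ℕ) : ℤ :=
  ∑ x ∈ B, ((x / t : ℕ) : ℤ) - ∑ r ∈ range t, ((#{x ∈ B | x % t = r}).choose 2 : ℤ)

lemma card_filter_mod_moveBead (hx : x ∈ B) (hxt : x + t ∉ B) (r : ℕ) :
    #{y ∈ insert (x + t) (B.erase x) | y % t = r} = #{y ∈ B | y % t = r} := by
  rw [filter_insert, filter_erase, Nat.add_mod_right]
  split_ifs with hr
  · rw [card_insert_of_notMem (fun h => hxt (mem_filter.1 (mem_of_mem_erase h)).1),
      card_erase_add_one (mem_filter.2 ⟨hx, hr⟩)]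
  · rw [erase_eq_of_notMem]
    exact fun h => hr (mem_filter.1 h).2

lemma quotWeight_moveBead (ht : t ≠ 0) (hx : x ∈ B) (hxt : x + t ∉ B) :
    quotWeight t (insert (x + t) (B.erase x)) = quotWeight t B + 1 := by
  simp only [quotWeight, card_filter_mod_moveBead hx hxt]
  rw [sum_insert (fun h => hxt (mem_of_mem_erase h)), Nat.add_div_right _ (Nat.pos_of_ne_zero ht),
    ← add_sum_erase B _ hx]
  push_cast
  ring

lemma card_filter_mod_image_add_union_range {r : ℕ} (hr : r < t) :
    #{y ∈ B.image (· + t) ∪ range t | y % t = r} = #{y ∈ B | y % t = r} + 1 := by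
  have hrange : {y ∈ range t | y % t = r} = {r} := by
    ext y
    simp only [mem_filter, mem_range, mem_singleton]
    constructor
    · exact fun h => (Nat.mod_eq_of_lt h.1).symm.trans h.2
    · rintro rfl
      exact ⟨hr, Nat.mod_eq_of_lt hr⟩
  rw [filter_union, filter_image, hrange, card_union_of_disjoint, card_singleton,
    card_image_of_injective _ (add_left_injective t)]
  · simp only [Nat.add_mod_right]
  · simp only [disjoint_singleton_right, mem_image]
    omega

lemma quotWeight_image_add_union_range (ht : t ≠ 0) (B : Finset ℕ) :
    quotWeight t (B.image (· + t) ∪ range t) = quotWeight t B := by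
  have hdisj : Disjoint (B.image (· + t)) (range t) := by
    simp only [disjoint_left, mem_image, mem_range]
    omega
  have hfibres : ∑ r ∈ range t, (#{y ∈ B | y % t = r} : ℤ) = #B := by
    exact_mod_cast (card_eq_sum_card_fiberwise fun y _ => mem_range.2 (Nat.mod_lt y
      (Nat.pos_of_ne_zero ht))).symm
  have hchoose : ∀ r ∈ range t, ((#{y ∈ B.image (· + t) ∪ range t | y % t = r}).choose 2 : ℤ) =
      (#{y ∈ B | y % t = r}).choose 2 + #{y ∈ B | y % t = r} := fun r hr => by
    rw [card_filter_mod_image_add_union_range (mem_range.1 hr), Nat.choose_succ_succ',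
      Nat.choose_one_right]
    push_cast
    ring
  simp only [quotWeight, sum_union hdisj, sum_image fun _ _ _ _ h => add_right_cancel h,
    Nat.add_div_right _ (Nat.pos_of_ne_zero ht), sum_congr rfl hchoose, sum_add_distrib, hfibres]
  rw [sum_eq_zero (s := range t) fun y hy => by rw [Nat.div_eq_of_lt (mem_range.1 hy)]; rfl]
  push_cast
  rw [sum_add_distrib, sum_const, nsmul_eq_mul, mul_one]
  ring

end Abacus

section BetaSets

variable {t N : ℕ} {f : ℕ → ℕ}

lemma mem_betaSet {x : ℕ} : x ∈ betaSet f N ↔ ∃ i < N, f i + (N - 1 - i) = x := by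
  simp [betaSet]

lemma strictAntiOn_beta (hf : Antitone f) (N : ℕ) :
    StrictAntiOn (fun i => f i + (N - 1 - i)) (Set.Iio N) := fun i _ j (hj : j < N) hij => by
  have := hf hij.le
  dsimp only
  omega

lemma card_betaSet (hf : Antitone f) (N : ℕ) : #(betaSet f N) = N := by
  rw [betaSet, card_image_of_injOn, card_range]
  simpa [Set.InjOn] using (strictAntiOn_beta hf N).injOn

lemma betaSet_add (hN : ∀ i, N ≤ i → f i = 0) (t : ℕ) :
    betaSet f (N + t) = (betaSet f N).image (· + t) ∪ range t := by
  ext x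
  simp only [mem_union, mem_image, mem_range, mem_betaSet]
  constructor
  · rintro ⟨i, hi, rfl⟩
    rcases lt_or_ge i N with h | h
    · exact Or.inl ⟨_, ⟨i, h, rfl⟩, by omega⟩
    · exact Or.inr (by rw [hN i h]; omega)
  · rintro (⟨_, ⟨i, hi, rfl⟩, rfl⟩ | hx)
    · exact ⟨i, by omega, by omega⟩
    · exact ⟨N + t - 1 - x, by omega, by rw [hN _ (by omega)]; omega⟩

lemma quotWeight_betaSet_add_mul (ht : t ≠ 0) (hN : ∀ i, N ≤ i → f i = 0) (m : ℕ) :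
    quotWeight t (betaSet f (N + m * t)) = quotWeight t (betaSet f N) := by
  induction m with
  | zero => simp
  | succ m ih =>
    rw [add_mul, one_mul, ← add_assoc, betaSet_add (fun i hi => hN i (by omega)),
      quotWeight_image_add_union_range ht, ih]

lemma le_getD_sort_div (ht : t ≠ 0) {S : Finset ℕ} (hS : ∀ x ∈ S, ∀ y ∈ S, x % t = y % t)
    {j : ℕ} (hj : j < #S) : j ≤ (S.sort (· ≤ ·)).getD j 0 / t := by
  induction j with
  | zero => exact Nat.zero_le _
  | succ j ih =>
    have hlen : (S.sort (· ≤ ·)).length = #S := length_sort _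
    have hmem : ∀ i < #S, (S.sort (· ≤ ·)).getD i 0 ∈ S := fun i hi => by
      rw [List.getD_eq_getElem _ _ (by omega), ← mem_sort (· ≤ ·)]
      exact List.getElem_mem _
    have hlt : (S.sort (· ≤ ·)).getD j 0 < (S.sort (· ≤ ·)).getD (j + 1) 0 := by
      rw [List.getD_eq_getElem _ _ (by omega), List.getD_eq_getElem _ _ (by omega)]
      exact (sortedLT_sort S).strictMono_get (show (⟨j, by omega⟩ : Fin _) < ⟨j + 1, by omega⟩
        from Nat.lt_succ_self j)
    have hgap := Nat.div_le_div_right (c := t)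
      (Nat.ModEq.add_le_of_lt (hS _ (hmem j (by omega)) _ (hmem (j + 1) hj)) hlt)
    rw [Nat.add_div_right _ (Nat.pos_of_ne_zero ht)] at hgap
    have := ih (by omega)
    omega

lemma sum_range_getD_sort (S : Finset ℕ) (g : ℕ → ℤ) :
    ∑ j ∈ range #S, g ((S.sort (· ≤ ·)).getD j 0) = ∑ x ∈ S, g x := by
  conv_rhs => rw [← map_orderEmbOfFin_univ S rfl, sum_map]
  rw [← Fin.sum_univ_eq_sum_range]
  refine sum_congr rfl fun j _ => ?_
  rw [RelEmbedding.coe_toEmbedding, orderEmbOfFin_apply, List.getD_eq_getElem _ _ (by simp)]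
  rfl

lemma sum_range_add_one_sub (c : ℕ) : ∑ k ∈ range c, ((k : ℤ) + 1 - c) = -(c.choose 2 : ℤ) := by
  induction c with
  | zero => simp
  | succ c ih =>
    rw [sum_range_succ, Nat.choose_succ_succ', Nat.choose_one_right]
    simp only [Nat.cast_add, Nat.cast_one, sub_add_eq_sub_sub, sum_sub_distrib, sum_const,
      card_range, nsmul_eq_mul, mul_one] at ih ⊢
    linarith

lemma psize_tQuot (ht : t ≠ 0) (f : ℕ → ℕ) (r : ℕ) :
    (psize (tQuot t f r) : ℤ) =
      ∑ x ∈ betaSet f (t * (plen f + 1)) with x % t = r, ((x / t : ℕ) : ℤ) -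
        ((#{x ∈ betaSet f (t * (plen f + 1)) | x % t = r}).choose 2 : ℤ) := by
  set S := {x ∈ betaSet f (t * (plen f + 1)) | x % t = r}
  have hS : ∀ x ∈ S, ∀ y ∈ S, x % t = y % t := fun x hx y hy =>
    (mem_filter.1 hx).2.trans (mem_filter.1 hy).2.symm
  have hq : ∀ k, tQuot t f r k =
      if k < #S then (S.sort (· ≤ ·)).getD (#S - 1 - k) 0 / t + (k + 1) - #S else 0 :=
    fun k => rfl
  rw [psize_eq_sum_range (M := #S) fun k hk => by rw [hq, if_neg (by omega)], Nat.cast_sum,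
    sum_congr rfl fun k hk => by
      have := le_getD_sort_div ht hS (j := #S - 1 - k) (by simp at hk; omega)
      rw [hq, if_pos (mem_range.1 hk), Nat.cast_sub (by omega)]]
  have hsplit : ∀ a k : ℕ, ((a + (k + 1) : ℕ) : ℤ) - #S = a + ((k : ℤ) + 1 - #S) := fun a k => by
    push_cast
    ring
  simp only [hsplit, sum_add_distrib]
  rw [sum_range_reflect (fun j => (((S.sort (· ≤ ·)).getD j 0 / t : ℕ) : ℤ)),
    sum_range_getD_sort S fun x => ((x / t : ℕ) : ℤ), sum_range_add_one_sub, sub_eq_add_neg]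

lemma apply_eq_zero_of_mul_succ_le (ht : t ≠ 0) (hf : ∃ M, ∀ i, M ≤ i → f i = 0) {n i : ℕ}
    (hn : plen f ≤ n) (hi : t * (n + 1) ≤ i) : f i = 0 :=
  apply_eq_zero_of_plen_le hf <| hn.trans <| (Nat.le_succ n).trans <|
    hi.trans' (Nat.le_mul_of_pos_left _ (Nat.pos_of_ne_zero ht))

lemma sum_psize_tQuot_eq_quotWeight (ht : t ≠ 0) (hf : ∃ M, ∀ i, M ≤ i → f i = 0) {n : ℕ}
    (hn : plen f ≤ n) :
    ∑ r ∈ range t, (psize (tQuot t f r) : ℤ) = quotWeight t (betaSet f (t * (n + 1))) := by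
  obtain ⟨d, rfl⟩ := Nat.exists_eq_add_of_le hn
  rw [show t * (plen f + d + 1) = t * (plen f + 1) + d * t by ring,
    quotWeight_betaSet_add_mul ht fun i => apply_eq_zero_of_mul_succ_le ht hf le_rfl,
    sum_congr rfl fun r _ => psize_tQuot ht f r, sum_sub_distrib, quotWeight,
    sum_fiberwise_of_maps_to fun x _ => mem_range.2 (Nat.mod_lt x (Nat.pos_of_ne_zero ht))]

end BetaSets

section RibbonBeads

variable {t N a b : ℕ} {lam mu : ℕ → ℕ}

namespace RibbonRows

lemma apply_eq_of_lt_or_lt (h : RibbonRows lam mu a b) (hsub : SubP mu lam) {i : ℕ}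
    (hi : i < a ∨ b < i) : lam i = mu i := by
  have := (h.lt_iff i).not.2 (by omega)
  have := hsub i
  omega

lemma lt_of_forall_le_eq_zero (h : RibbonRows lam mu a b) (hN : ∀ i, N ≤ i → lam i = 0) :
    b < N := by
  by_contra! hb
  have := (h.lt_iff b).2 ⟨h.le, le_rfl⟩
  have := hN b hb
  omega

/-- Outside row `b`, the beads of `μ` are beads of `λ`: row `j` of `μ` gives the bead of row
`j + 1` of `λ` when `a ≤ j < b`, and of row `j` otherwise. -/
lemma beta_mem_betaSet (h : RibbonRows lam mu a b) (hsub : SubP mu lam)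
    (hN : ∀ i, N ≤ i → lam i = 0) {j : ℕ} (hj : j < N) (hjb : j ≠ b) :
    mu j + (N - 1 - j) ∈ betaSet lam N := by
  have hbN := h.lt_of_forall_le_eq_zero hN
  rw [mem_betaSet]
  by_cases hja : a ≤ j ∧ j < b
  · exact ⟨j + 1, by omega, by rw [h.succ_eq j hja.1 hja.2]; omega⟩
  · exact ⟨j, hj, by rw [h.apply_eq_of_lt_or_lt hsub (by omega)]⟩

lemma lt_beta_of_lt (h : RibbonRows lam mu a b) (hsub : SubP mu lam) (hlam : Antitone lam)
    {j : ℕ} (hja : j < a) (haN : a < N) : lam a + (N - 1 - a) < mu j + (N - 1 - j) := by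
  rw [← h.apply_eq_of_lt_or_lt hsub (Or.inl hja)]
  exact strictAntiOn_beta hlam N (hja.trans haN) haN hja

lemma beta_add_notMem_betaSet (h : RibbonRows lam mu a b) (hsub : SubP mu lam)
    (hlam : Antitone lam) (hmu : Antitone mu) (hsize : t + mu b = (b - a) + lam a)
    (hN : ∀ i, N ≤ i → lam i = 0) : mu b + (N - 1 - b) + t ∉ betaSet mu N := by
  have hbN := h.lt_of_forall_le_eq_zero hN
  have hab := h.le
  have ha := (h.lt_iff a).2 ⟨le_rfl, h.le⟩
  rw [mem_betaSet]
  rintro ⟨j, hj, hjx⟩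
  rcases lt_or_ge j a with hja | hja
  · have := h.lt_beta_of_lt hsub hlam hja (show a < N by omega)
    omega
  · have := (strictAntiOn_beta hmu N).antitoneOn (show a < N by omega) hj hja
    omega

lemma card_filter_betaSet_between (h : RibbonRows lam mu a b) (hsub : SubP mu lam)
    (hlam : Antitone lam) (hmu : Antitone mu) (hsize : t + mu b = (b - a) + lam a)
    (hN : ∀ i, N ≤ i → lam i = 0) :
    #{y ∈ betaSet mu N | mu b + (N - 1 - b) < y ∧ y < mu b + (N - 1 - b) + t} = b - a := by
  have hbN := h.lt_of_forall_le_eq_zero hN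
  have hab := h.le
  have ha := (h.lt_iff a).2 ⟨le_rfl, h.le⟩
  have hβ := strictAntiOn_beta hmu N
  rw [betaSet, filter_image,
    card_image_of_injOn (hβ.injOn.mono fun j hj => mem_range.1 (mem_filter.1 hj).1),
    ← Nat.card_Ico a b]
  congr 1
  ext j
  simp only [mem_filter, mem_range, mem_Ico]
  constructor
  · rintro ⟨hj, h1, h2⟩
    refine ⟨?_, ?_⟩
    · by_contra! hja
      have := h.lt_beta_of_lt hsub hlam hja (show a < N by omega)
      omega
    · by_contra! hjb
      have := hβ.antitoneOn hbN hj hjb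
      omega
  · rintro ⟨haj, hjb⟩
    have h1 := hβ (show j < N by omega) hbN hjb
    have h2 := hβ.antitoneOn (show a < N by omega) (show j < N by omega) haj
    dsimp only at h1 h2
    exact ⟨by omega, by omega, by omega⟩

lemma betaSet_eq (h : RibbonRows lam mu a b) (hsub : SubP mu lam) (hlam : Antitone lam)
    (hmu : Antitone mu) (hsize : t + mu b = (b - a) + lam a) (hN : ∀ i, N ≤ i → lam i = 0) :
    betaSet lam N =
      insert (mu b + (N - 1 - b) + t) ((betaSet mu N).erase (mu b + (N - 1 - b))) := by
  have hbN := h.lt_of_forall_le_eq_zero hN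
  have hab := h.le
  have hx : mu b + (N - 1 - b) ∈ betaSet mu N := mem_betaSet.2 ⟨b, hbN, rfl⟩
  have hxt := h.beta_add_notMem_betaSet hsub hlam hmu hsize hN
  refine (eq_of_subset_of_card_le (fun y hy => ?_) ?_).symm
  · rcases mem_insert.1 hy with rfl | hy
    · exact mem_betaSet.2 ⟨a, by omega, by omega⟩
    · obtain ⟨hyx, hy⟩ := mem_erase.1 hy
      obtain ⟨j, hj, rfl⟩ := mem_betaSet.1 hy
      exact h.beta_mem_betaSet hsub hN hj (by rintro rfl; exact hyx rfl)
  · rw [card_betaSet hlam, card_insert_of_notMem (fun h' => hxt (mem_of_mem_erase h')),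
      card_erase_of_mem hx, card_betaSet hmu]
    omega

end RibbonRows

lemma IsRibbon.exists_moveBead (hR : IsRibbon t lam mu) (hlam : IsPartition lam)
    (hmu : IsPartition mu) (ht : t ≠ 0) (hN : ∀ i, N ≤ i → lam i = 0) :
    ∃ x ∈ betaSet mu N, x + t ∉ betaSet mu N ∧
      betaSet lam N = insert (x + t) ((betaSet mu N).erase x) ∧
      #{y ∈ betaSet mu N | x < y ∧ y < x + t} = ribbonHeight lam mu := by
  obtain ⟨a, b, h⟩ := hR.exists_ribbonRows hlam hmu.1 ht
  have hsize := h.ncard_skewCells_add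
  rw [hR.2.1] at hsize
  exact ⟨_, mem_betaSet.2 ⟨b, h.lt_of_forall_le_eq_zero hN, rfl⟩,
    h.beta_add_notMem_betaSet hR.1 hlam.1 hmu.1 hsize hN, h.betaSet_eq hR.1 hlam.1 hmu.1 hsize hN,
    (h.card_filter_betaSet_between hR.1 hlam.1 hmu.1 hsize hN).trans h.ribbonHeight_eq.symm⟩

end RibbonBeads

section Decompositions

variable {t k N : ℕ} {mu lam : ℕ → ℕ} {ν : ℕ → ℕ → ℕ}

namespace IsRibbonDecomp

lemma isPartition_left (hν : IsRibbonDecomp t mu lam k ν) : IsPartition mu :=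
  hν.1 ▸ hν.2.2.1 0 (Nat.zero_le k)

lemma isPartition_right (hν : IsRibbonDecomp t mu lam k ν) : IsPartition lam :=
  hν.2.1 ▸ hν.2.2.1 k le_rfl

lemma init (hν : IsRibbonDecomp t mu lam (k + 1) ν) : IsRibbonDecomp t mu (ν k) k ν :=
  ⟨hν.1, rfl, fun i hi => hν.2.2.1 i (by omega), fun i hi => hν.2.2.2 i (by omega)⟩

lemma isRibbon_last (hν : IsRibbonDecomp t mu lam (k + 1) ν) : IsRibbon t lam (ν k) :=
  hν.2.1 ▸ hν.2.2.2 k (by omega)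

lemma decompHeight_succ (hν : IsRibbonDecomp t mu lam (k + 1) ν) :
    decompHeight ν (k + 1) = decompHeight ν k + ribbonHeight lam (ν k) := by
  rw [decompHeight, sum_range_succ, hν.2.1]
  rfl

lemma subP (hν : IsRibbonDecomp t mu lam k ν) : SubP mu lam := by
  induction k generalizing lam with
  | zero => exact fun i => (hν.2.1 ▸ hν.1 ▸ le_rfl : mu i ≤ lam i)
  | succ k ih => exact fun i => (ih hν.init i).trans (hν.isRibbon_last.1 i)

lemma neg_one_pow_decompHeight_mul_sgnW (hν : IsRibbonDecomp t mu lam k ν) (ht : t ≠ 0)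
    (hN : ∀ i, N ≤ i → lam i = 0) : (-1) ^ decompHeight ν k * sgnW t mu N = sgnW t lam N := by
  induction k generalizing lam with
  | zero => simp [decompHeight, ← hν.1, hν.2.1]
  | succ k ih =>
    have hR := hν.isRibbon_last
    obtain ⟨x, hx, hxt, hβ, hcount⟩ := hR.exists_moveBead hν.isPartition_right
      hν.init.isPartition_right ht hN
    rw [hν.decompHeight_succ, pow_add, mul_right_comm,
      ih hν.init fun i hi => hR.1.apply_eq_zero (hN i hi),
      sgnW_eq_neg_one_pow_invCount, sgnW_eq_neg_one_pow_invCount, hβ,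
      neg_one_pow_invCount_moveBead hx hxt, hcount, mul_comm]

lemma quotWeight_betaSet (hν : IsRibbonDecomp t mu lam k ν) (ht : t ≠ 0)
    (hN : ∀ i, N ≤ i → lam i = 0) :
    quotWeight t (betaSet lam N) = quotWeight t (betaSet mu N) + k := by
  induction k generalizing lam with
  | zero => simp [← hν.1, hν.2.1]
  | succ k ih =>
    have hR := hν.isRibbon_last
    obtain ⟨x, hx, hxt, hβ, -⟩ := hR.exists_moveBead hν.isPartition_right
      hν.init.isPartition_right ht hN
    rw [hβ, quotWeight_moveBead ht hx hxt,
      ih hν.init fun i hi => hR.1.apply_eq_zero (hN i hi)]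
    push_cast
    ring

lemma sum_psize_tQuot (hν : IsRibbonDecomp t mu lam k ν) (ht : t ≠ 0) :
    ∑ r ∈ range t, (psize (tQuot t lam r) : ℤ) = ∑ r ∈ range t, (psize (tQuot t mu r) : ℤ) + k := by
  have hlam := hν.isPartition_right
  have hN : ∀ i, plen lam ≤ i → mu i = 0 := fun i hi =>
    hν.subP.apply_eq_zero (apply_eq_zero_of_plen_le hlam.2 hi)
  rw [sum_psize_tQuot_eq_quotWeight ht hlam.2 le_rfl,
    sum_psize_tQuot_eq_quotWeight ht hν.isPartition_left.2 (plen_le hN),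
    hν.quotWeight_betaSet ht fun i => apply_eq_zero_of_mul_succ_le ht hlam.2 le_rfl]

lemma neg_one_pow_decompHeight_eq {k' : ℕ} {ν' : ℕ → ℕ → ℕ} (hν : IsRibbonDecomp t mu lam k ν)
    (hν' : IsRibbonDecomp t mu lam k' ν') (ht : t ≠ 0) :
    (-1 : ℤ) ^ decompHeight ν k = (-1) ^ decompHeight ν' k' := by
  have hN := fun i => apply_eq_zero_of_plen_le (i := i) hν.isPartition_right.2
  refine mul_right_cancel₀ (b := sgnW t mu (plen lam)) (pow_ne_zero _ (by norm_num)) ?_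
  rw [hν.neg_one_pow_decompHeight_mul_sgnW ht hN, hν'.neg_one_pow_decompHeight_mul_sgnW ht hN]

lemma conjP (hν : IsRibbonDecomp t mu lam k ν) :
    IsRibbonDecomp t (conjP mu) (conjP lam) k fun i => conjP (ν i) :=
  ⟨congrArg _ hν.1, congrArg _ hν.2.1, fun i hi => (hν.2.2.1 i hi).conjP,
    fun i hi => (hν.2.2.2 i hi).conjP (hν.2.2.1 (i + 1) hi) (hν.2.2.1 i hi.le)⟩

end IsRibbonDecomp

lemma decompHeight_add_decompHeight_conjP (hν : IsRibbonDecomp t mu lam k ν) (ht : t ≠ 0) :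
    decompHeight ν k + decompHeight (fun i => conjP (ν i)) k = k * (t - 1) := by
  rw [decompHeight, decompHeight, ← sum_add_distrib, sum_congr rfl fun i hi =>
    ribbonHeight_add_ribbonHeight_conjP (hν.2.2.2 i (mem_range.1 hi)) (hν.2.2.1 (i + 1)
      (mem_range.1 hi)) (hν.2.2.1 i (mem_range.1 hi).le) ht, sum_const, card_range, smul_eq_mul]

end Decompositions

theorem sgn_skew_conj_general (t : ℕ) (ht : 2 ≤ t) (lam mu : ℕ → ℕ) :
    ∀ k ν k' ν', IsRibbonDecomp t mu lam k ν →
      IsRibbonDecomp t (conjP mu) (conjP lam) k' ν' →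
      (-1 : ℤ) ^ decompHeight ν k * (-1 : ℤ) ^ decompHeight ν' k' =
        msign (((t : ℤ) - 1) *
          ((∑ r ∈ Finset.range t, (psize (tQuot t lam r) : ℤ)) -
            ∑ r ∈ Finset.range t, (psize (tQuot t mu r) : ℤ))) := by
  intro k ν k' ν' hν hν'
  have ht0 : t ≠ 0 := by omega
  have hexp : ((t : ℤ) - 1) * k = ((k * (t - 1) : ℕ) : ℤ) := by
    push_cast [Nat.cast_sub (by omega : 1 ≤ t)]
    ring
  rw [hν.sum_psize_tQuot ht0, add_sub_cancel_left, hexp, msign_natCast,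
    ← hν.conjP.neg_one_pow_decompHeight_eq hν' ht0, ← pow_add,
    decompHeight_add_decompHeight_conjP hν ht0]

/-- **Lemma.** For a `t`-tileable skew shape `λ/μ`,
`sgn_t(λ/μ) · sgn_t(λ'/μ') = (-1)^{(t-1)(|λ^{(0)}|+⋯+|λ^{(t-1)}| - |μ^{(0)}|-⋯-|μ^{(t-1)}|)}`
(the signs being `(-1)^{ht(D)}` for any ribbon decompositions of `λ/μ` and `λ'/μ'`). -/
theorem sgn_skew_conj (t : ℕ) (ht : 2 ≤ t) (lam mu : ℕ → ℕ)
    (hlam : IsPartition lam) (hmu : IsPartition mu) (hsub : SubP mu lam)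
    (htile : Tileable t mu lam) :
    ∀ k ν k' ν', IsRibbonDecomp t mu lam k ν →
      IsRibbonDecomp t (conjP mu) (conjP lam) k' ν' →
      (-1 : ℤ) ^ decompHeight ν k * (-1 : ℤ) ^ decompHeight ν' k' =
        msign (((t : ℤ) - 1) *
          ((∑ r ∈ Finset.range t, (psize (tQuot t lam r) : ℤ)) -
            ∑ r ∈ Finset.range t, (psize (tQuot t mu r) : ℤ))) :=
  sgn_skew_conj_general t ht lam mu

end
end

section
/- For any partition λ, the identity rs_{λ,λ} = so_λ · so^−_λ holds in the ring of symmetric functions. -/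
open scoped BigOperators

noncomputable section

namespace Matrix

variable {R n : Type*} [CommRing R] [Fintype n] [DecidableEq n]

/- Subtracting the first block row from the second and then adding the second block column
to the first leaves a block upper triangular matrix with diagonal blocks `A + B`, `A - B`. -/
theorem det_fromBlocks_eq_det_add_mul_det_sub (A B : Matrix n n R) :
    (fromBlocks A B B A).det = (A + B).det * (A - B).det := by
  have factor : fromBlocks A B B A =
      fromBlocks 1 0 1 1 * fromBlocks (A + B) B 0 (A - B) * fromBlocks 1 0 (-1) 1 := by
    simp [fromBlocks_multiply]
  rw [factor, det_mul, det_mul, det_fromBlocks_zero₁₂, det_fromBlocks_zero₂₁,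
    det_fromBlocks_zero₁₂]
  simp

end Matrix

theorem rs_eq_so_mul_soMinus_general (lam : ℕ → ℕ) :
    rsP lam lam = soU lam * soMinusU lam := by
  rw [rsP, rsN, Matrix.det_fromBlocks_eq_det_add_mul_det_sub, soU, soMinusU]
  rfl

/-- **Theorem (Ciucu–Krattenthaler, Ayyer–Behrend; universal form).**
`rs_{λ,λ} = so_λ · so⁻_λ` in the ring of symmetric functions. -/
theorem rs_eq_so_mul_soMinus (lam : ℕ → ℕ) (hlam : IsPartition lam) :
    rsP lam lam = soU lam * soMinusU lam :=
  rs_eq_so_mul_soMinus_general lam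

end
end
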